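/- arXiv:1810.03898 — 10 statements merged into one kernel-verified Lean document; each statement's English description precedes it below -/
import Mathlib

section
/- If a, b, c, d are coprime integers (gcd(a,b,c,d)=1), then there exist integers α, β, γ, δ such that aα + bβ + cγ + dδ = 1 and αδ = βγ. -/
/-!
A rank-one matrix `(X, Y)ᵀ (P, Q)` pairs with the rows `(a, b), (c, d)` to
`P (X a + Y c) + Q (X b + Y d)`, so it suffices to find a combination `X (a, b) + Y (c, d)` with
coprime entries. Writing `(a, b) = g (a', b')` with `u a' + v b' = 1`, the unimodular column
operation `[[u, -b'], [v, a']]` turns the rows into `(g, 0), (w, Δ)`, whose entries still have no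
common factor. If `Δ ≠ 0`, take `x` to be the product of the primes of `Δ` not dividing `w`:
then no prime of `Δ` divides `g x + w`, and `(x, 1)` works.
-/

open UniqueFactorizationMonoid

variable {R : Type*} [CommRing R] [IsDomain R] [IsPrincipalIdealRing R]

theorem exists_isCoprime_mul_add {g w n : R} (hn : n ≠ 0)
    (h : ∀ k, k ∣ g → k ∣ w → k ∣ n → IsUnit k) : ∃ x, IsCoprime (g * x + w) n := by
  classical
  set x := ∏ p ∈ (factors n).toFinset with ¬ p ∣ w, p
  refine ⟨x, isCoprime_of_prime_dvd (fun h0 => hn h0.2) fun z hz hzm hzn => ?_⟩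
  by_cases hzw : z ∣ w
  · have hzg : ¬ z ∣ g := fun hzg => hz.not_isUnit (h z hzg hzw hzn)
    obtain ⟨p, hpS, hzp⟩ := (hz.dvd_finsetProd_iff _).mp <|
      (hz.dvd_or_dvd ((dvd_add_left hzw).mp hzm)).resolve_left hzg
    rw [Finset.mem_filter, Multiset.mem_toFinset] at hpS
    exact hpS.2 ((hz.associated_of_dvd (prime_of_factor p hpS.1) hzp).symm.dvd.trans hzw)
  · obtain ⟨q, hq, hzq⟩ := exists_mem_factors_of_dvd hn hz.irreducible hzn
    have hqS : q ∈ (factors n).toFinset.filter (¬ · ∣ w) :=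
      Finset.mem_filter.mpr ⟨Multiset.mem_toFinset.mpr hq, fun hqw => hzw (hzq.dvd.trans hqw)⟩
    have hzx : z ∣ x := hzq.dvd.trans (Finset.dvd_prod_of_mem _ hqS)
    exact hzw ((dvd_add_right (hzx.mul_left g)).mp hzm)

theorem exists_isCoprime_mul_add_mul_of_triangular {g w n : R}
    (h : ∀ k, k ∣ g → k ∣ w → k ∣ n → IsUnit k) :
    ∃ X Y, IsCoprime (X * g + Y * w) (Y * n) := by
  rcases eq_or_ne n 0 with rfl | hn
  · obtain ⟨X, Y, hXY⟩ : IsCoprime g w :=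
      IsRelPrime.isCoprime fun k hg hw => h k hg hw (dvd_zero k)
    exact ⟨X, Y, hXY ▸ isCoprime_one_left⟩
  · obtain ⟨x, hx⟩ := exists_isCoprime_mul_add hn h
    exact ⟨x, 1, by simpa [mul_comm] using hx⟩

theorem exists_isCoprime_mul_eq (a b : R) :
    ∃ a' b' g, IsCoprime a' b' ∧ g * a' = a ∧ g * b' = b := by
  rcases eq_or_ne b 0 with rfl | hb
  · exact ⟨1, 0, a, isCoprime_one_left, mul_one a, mul_zero a⟩
  · obtain ⟨a', b', g, hab, ha, hb⟩ := exists_reduced_factors' a b hb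
    exact ⟨a', b', g, hab.isCoprime, ha, hb⟩

theorem exists_isCoprime_mul_add_mul {a b c d : R}
    (h : ∀ k, k ∣ a → k ∣ b → k ∣ c → k ∣ d → IsUnit k) :
    ∃ X Y, IsCoprime (X * a + Y * c) (X * b + Y * d) := by
  obtain ⟨a', b', g, ⟨u, v, huv⟩, rfl, rfl⟩ := exists_isCoprime_mul_eq a b
  obtain ⟨X, Y, s, t, hst⟩ :=
    exists_isCoprime_mul_add_mul_of_triangular (g := g) (w := c * u + d * v) (n := a' * d - b' * c)
      fun k hg hw hΔ => h k (hg.mul_right a') (hg.mul_right b')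
        (by convert (hw.mul_left a').sub (hΔ.mul_left v) using 1; linear_combination -c * huv)
        (by convert (hw.mul_left b').add (hΔ.mul_left u) using 1; linear_combination -d * huv)
  exact ⟨X, Y, s * u - t * b', s * v + t * a', by linear_combination hst + s * X * g * huv⟩

theorem exists_add_mul_eq_one_and_mul_eq_mul {a b c d : R}
    (h : ∀ k, k ∣ a → k ∣ b → k ∣ c → k ∣ d → IsUnit k) :
    ∃ α β γ δ : R, a * α + b * β + c * γ + d * δ = 1 ∧ α * δ = β * γ := by
  obtain ⟨X, Y, P, Q, hPQ⟩ := exists_isCoprime_mul_add_mul h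
  exact ⟨X * P, X * Q, Y * P, Y * Q, by linear_combination hPQ, by ring⟩

theorem stmt_0 (a b c d : ℤ) (h : Int.gcd (Int.gcd (Int.gcd a b) c) d = 1) :
    ∃ α β γ δ : ℤ, a * α + b * β + c * γ + d * δ = 1 ∧ α * δ = β * γ := by
  refine exists_add_mul_eq_one_and_mul_eq_mul fun k ha hb hc hd => isUnit_of_dvd_one ?_
  have hk := Int.dvd_coe_gcd (Int.dvd_coe_gcd (Int.dvd_coe_gcd ha hb) hc) hd
  rwa [h, Nat.cast_one] at hk
end

section
/- Let R be a commutative ring and B = [[a,c],[b,d]] a 2×2 matrix over R whose entries generate the unit ideal. If there exists a 2×2 matrix C over R with det(C) = 0 such that the entries of BC generate the unit ideal, then there exists a 2×2 matrix C₀ over R with det(C₀) = 0 and Tr(BC₀) = 1. -/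
/-! Since `Tr (M * X) = ∑ i j, M i j * X j i`, every element of the content of `M` is a trace
`Tr (M * X)`. Applied to `M = B * C` this gives `X` with `Tr (B * (C * X)) = 1`, and
`C₀ = C * X` is singular because `C` is. -/

/-- The content of a matrix: the ideal generated by its entries. -/
def matrixContent {R : Type*} [CommRing R] {n m : Type*}
    (M : Matrix n m R) : Ideal R :=
  Ideal.span {r : R | ∃ i j, M i j = r}

theorem matrixContent_eq_span_range {R : Type*} [CommRing R] {n m : Type*} (M : Matrix n m R) :
    matrixContent M = Ideal.span (Set.range fun p : n × m => M p.1 p.2) := by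
  unfold matrixContent
  congr 1
  ext r
  simp

theorem exists_trace_mul_eq_of_mem_matrixContent {R : Type*} [CommRing R] {n m : Type*}
    [Fintype n] [Fintype m] {M : Matrix n m R} {r : R} (hr : r ∈ matrixContent M) :
    ∃ X : Matrix m n R, (M * X).trace = r := by
  rw [matrixContent_eq_span_range, Ideal.mem_span_range_iff_exists_fun] at hr
  obtain ⟨c, rfl⟩ := hr
  refine ⟨Matrix.of fun j i => c (i, j), ?_⟩
  simp [Matrix.trace, Matrix.mul_apply, Fintype.sum_prod_type, mul_comm]

theorem stmt_3_general {R : Type*} [CommRing R]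
    (B : Matrix (Fin 2) (Fin 2) R)
    (hC : ∃ C : Matrix (Fin 2) (Fin 2) R, C.det = 0 ∧ matrixContent (B * C) = ⊤) :
    ∃ C₀ : Matrix (Fin 2) (Fin 2) R, C₀.det = 0 ∧ (B * C₀).trace = 1 := by
  obtain ⟨C, hCdet, hBC⟩ := hC
  obtain ⟨X, hX⟩ := exists_trace_mul_eq_of_mem_matrixContent (hBC ▸ Submodule.mem_top)
  exact ⟨C * X, by rw [Matrix.det_mul, hCdet, zero_mul], by rw [← Matrix.mul_assoc, hX]⟩

theorem stmt_3 {R : Type*} [CommRing R]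
    (B : Matrix (Fin 2) (Fin 2) R)
    (hB : matrixContent B = ⊤)
    (hC : ∃ C : Matrix (Fin 2) (Fin 2) R, C.det = 0 ∧ matrixContent (B * C) = ⊤) :
    ∃ C₀ : Matrix (Fin 2) (Fin 2) R, C₀.det = 0 ∧ (B * C₀).trace = 1 :=
  stmt_3_general B hC
end

section
/- Let V be a rank-one valuation domain with valuation v and E ⊆ V. If E contains no pseudo-divergent sequence (i.e., no sequence with v(x_n − x_m) < v(x_m − x_l) for all l < m < n), then E admits a v-ordering: a sequence {a_n} in E such that for all n ≥ 1, v(∏_{k<n}(a_n − a_k)) = inf_{x∈E} v(∏_{k<n}(x − a_k)), and in particular this infimum is attained. -/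
/-!
Fix finitely many centres `c₁, …, cₙ`. If `x ↦ v (∏ (x - cᵢ))` had no minimum on `E`, there
would be a sequence in `E` along which `∑ v (x - cᵢ)` strictly decreases; by Erdős–Szekeres one
summand `v (x - cᵢ)` strictly decreases along a subsequence, and then the ultrametric inequality
forces `v (x_q - x_p) = v (x_q - cᵢ)` for `p < q`, so that subsequence is pseudo-divergent.
Hence every step of the greedy construction of a `v`-ordering succeeds.
-/

open Finset

def IsPseudoDivergent {R Γ₀ : Type*} [Ring R] [LinearOrderedAddCommMonoidWithTop Γ₀]
    (v : AddValuation R Γ₀) (x : ℕ → R) : Prop :=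
  ∀ l m n : ℕ, l < m → m < n → v (x n - x m) < v (x m - x l)

theorem exists_seq_forall_of_forall_fin_exists {β : Type*} {P : (n : ℕ) → (Fin n → β) → β → Prop}
    (h : ∀ n c, ∃ b, P n c b) : ∃ a : ℕ → β, ∀ n, P n (fun k => a k) (a n) := by
  choose next hnext using h
  let a : ℕ → β := fun n => Nat.strongRec (fun n a => next n fun k => a k k.2) n
  have ha : ∀ n, a n = next n fun k => a k := fun n => Nat.strongRec_eq _ n
  exact ⟨a, fun n => ha n ▸ hnext n _⟩

theorem exists_isMinOn_of_forall_not_strictAnti {β α : Type*} [LinearOrder α] {f : β → α}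
    {E : Set β} (hE : E.Nonempty) (h : ∀ x : ℕ → β, (∀ n, x n ∈ E) → ¬ StrictAnti (f ∘ x)) :
    ∃ a ∈ E, IsMinOn f E a := by
  have hwf : (f '' E).IsWF := by
    refine Set.isWF_iff_no_descending_seq.2 fun y hy hyE => ?_
    choose x hxE hfx using hyE
    exact h x hxE (by simpa only [Function.comp_def, hfx] using hy)
  obtain ⟨a, haE, ha⟩ := hwf.min_mem (hE.image f)
  exact ⟨a, haE, fun x hx => ha ▸ hwf.min_le _ (Set.mem_image_of_mem f hx)⟩

theorem exists_strictAnti_subseq_of_strictAnti_sum {ι α : Type*} [AddCommMonoid α] [LinearOrder α]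
    [IsOrderedAddMonoid α] (s : Finset ι) (f : ι → ℕ → α) (h : StrictAnti fun j => ∑ i ∈ s, f i j) :
    ∃ i ∈ s, ∃ φ : ℕ → ℕ, StrictMono φ ∧ StrictAnti (f i ∘ φ) := by
  induction s using Finset.cons_induction generalizing f with
  | empty => simpa using h zero_lt_one
  | cons a s _ ih =>
    obtain ⟨g, hanti | hmono⟩ := exists_increasing_or_nonincreasing_subseq (· > ·) (f a)
    · exact ⟨a, mem_cons_self a s, g, g.strictMono, fun m n hmn => hanti m n hmn⟩
    · have hrest : StrictAnti fun j => ∑ i ∈ s, f i (g j) := by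
        intro m n hmn
        have hsum := h (g.strictMono hmn)
        simp only [sum_cons] at hsum
        by_contra! hle
        exact (add_le_add (not_lt.1 (hmono m n hmn)) hle).not_gt hsum
      obtain ⟨i, hi, φ, hφ, hiφ⟩ := ih (fun i j => f i (g j)) hrest
      exact ⟨i, mem_cons.2 (Or.inr hi), g ∘ φ, g.strictMono.comp hφ, hiφ⟩

namespace AddValuation

variable {R Γ₀ : Type*} [LinearOrderedAddCommMonoidWithTop Γ₀]

theorem map_finset_prod [CommRing R] (v : AddValuation R Γ₀) {ι : Type*} (s : Finset ι)
    (f : ι → R) : v (∏ i ∈ s, f i) = ∑ i ∈ s, v (f i) := by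
  induction s using Finset.cons_induction with
  | empty => simp
  | cons a s _ ih => rw [prod_cons, sum_cons, v.map_mul, ih]

theorem isPseudoDivergent_of_strictAnti [Ring R] (v : AddValuation R Γ₀) {x : ℕ → R} {c : R}
    (h : StrictAnti fun n => v (x n - c)) : IsPseudoDivergent v x := by
  -- Against the common centre `c`, each difference has the valuation of its later term.
  have hdist : ∀ {p q}, p < q → v (x q - x p) = v (x q - c) := fun {p q} hpq => by
    rw [← sub_sub_sub_cancel_right (x q) (x p) c, v.map_sub_eq_of_lt_left (h hpq)]
  intro l m n hlm hmn
  rw [hdist hmn, hdist hlm]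
  exact h hmn

theorem exists_isMinOn_map_prod_sub [CommRing R] (v : AddValuation R Γ₀) {E : Set R}
    (hE : E.Nonempty) (hnd : ¬ ∃ x : ℕ → R, (∀ n, x n ∈ E) ∧ IsPseudoDivergent v x)
    {ι : Type*} (s : Finset ι) (c : ι → R) :
    ∃ a ∈ E, IsMinOn (fun x => v (∏ i ∈ s, (x - c i))) E a := by
  refine exists_isMinOn_of_forall_not_strictAnti hE fun x hxE hx => hnd ?_
  simp only [Function.comp_def, v.map_finset_prod] at hx
  obtain ⟨i, -, φ, hφ, hanti⟩ :=
    exists_strictAnti_subseq_of_strictAnti_sum s (fun i n => v (x n - c i)) hx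
  exact ⟨x ∘ φ, fun n => hxE (φ n), v.isPseudoDivergent_of_strictAnti hanti⟩

end AddValuation

theorem stmt_9_general {V : Type*} [CommRing V]
    (v : AddValuation V (WithTop ℝ)) (E : Set V) (hE : E.Nonempty)
    (hnd : ¬ ∃ x : ℕ → V, (∀ n, x n ∈ E) ∧
      ∀ l m n : ℕ, l < m → m < n → v (x n - x m) < v (x m - x l)) :
    ∃ a : ℕ → V, (∀ n, a n ∈ E) ∧
      ∀ n : ℕ, 1 ≤ n → ∀ x ∈ E,
        v (∏ k ∈ Finset.range n, (a n - a k)) ≤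
          v (∏ k ∈ Finset.range n, (x - a k)) := by
  obtain ⟨a, ha⟩ := exists_seq_forall_of_forall_fin_exists
    (P := fun n c b => b ∈ E ∧ IsMinOn (fun x => v (∏ k, (x - c k))) E b)
    fun n c => v.exists_isMinOn_map_prod_sub hE hnd univ c
  refine ⟨a, fun n => (ha n).1, fun n _ x hx => ?_⟩
  rw [← Fin.prod_univ_eq_prod_range, ← Fin.prod_univ_eq_prod_range]
  exact isMinOn_iff.1 (ha n).2 x hx

theorem stmt_9 {V : Type*} [CommRing V] [IsDomain V] [ValuationRing V]
    (v : AddValuation V (WithTop ℝ)) (E : Set V) (hE : E.Nonempty)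
    (hnd : ¬ ∃ x : ℕ → V, (∀ n, x n ∈ E) ∧
      ∀ l m n : ℕ, l < m → m < n → v (x n - x m) < v (x m - x l)) :
    ∃ a : ℕ → V, (∀ n, a n ∈ E) ∧
      ∀ n : ℕ, 1 ≤ n → ∀ x ∈ E,
        v (∏ k ∈ Finset.range n, (a n - a k)) ≤
          v (∏ k ∈ Finset.range n, (x - a k)) :=
  stmt_9_general v E hE hnd
end

section
/- Let V be a rank-one valuation domain with valuation v, E an infinite subset of V, and h(X) = ∏_{k=0}^{n−1}(X − a_k) with a_k ∈ V. If the infimum inf_{x∈E} v(h(x)) is not attained, then E contains an infinite sequence {x_m} and an index k < n such that v(x_m − a_k) is strictly decreasing in m; in particular E contains a pseudo-divergent sequence if no such strictly decreasing subsequence exists among the other factors. -/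
/-!
Since the infimum of `v ∘ h` on `E` is not attained, iterating "pick a point of `E` with smaller
value" gives a sequence in `E` along which `v (h (x m)) = ∑ₖ v (x m - a k)` strictly decreases.
By Ramsey's theorem for sequences, each factor sequence has a subsequence that is either strictly
decreasing or nondecreasing. Peeling off the factors one at a time, a nondecreasing factor forces
the sum of the remaining ones to keep decreasing strictly; since an empty sum is constant, some
factor must eventually be strictly decreasing along a subsequence.
-/

open Finset

theorem AddValuation.map_prod {R Γ₀ ι : Type*} [CommRing R] [LinearOrderedAddCommMonoidWithTop Γ₀]
    (v : AddValuation R Γ₀) (s : Finset ι) (f : ι → R) :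
    v (∏ i ∈ s, f i) = ∑ i ∈ s, v (f i) := by
  induction s using Finset.cons_induction with
  | empty => simp
  | cons a s ha ih => rw [prod_cons, sum_cons, v.map_mul, ih]

theorem exists_seq_strictAnti_of_forall_exists_lt {β α : Type*} [Preorder α] (g : β → α)
    {E : Set β} (hE : E.Nonempty) (h : ∀ y ∈ E, ∃ x ∈ E, g x < g y) :
    ∃ x : ℕ → β, (∀ m, x m ∈ E) ∧ StrictAnti (g ∘ x) := by
  choose next hnext_mem hnext_lt using h
  let step : E → E := fun y => ⟨next y y.2, hnext_mem y y.2⟩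
  obtain ⟨y₀, hy₀⟩ := hE
  refine ⟨fun m => (step^[m] ⟨y₀, hy₀⟩ : β), fun m => Subtype.prop _, ?_⟩
  refine strictAnti_nat_of_succ_lt fun m => ?_
  simp only [Function.comp_apply, Function.iterate_succ_apply']
  exact hnext_lt _ _

theorem exists_subseq_strictAnti_or_monotone {α : Type*} [LinearOrder α] (f : ℕ → α) :
    ∃ φ : ℕ → ℕ, StrictMono φ ∧ (StrictAnti (f ∘ φ) ∨ Monotone (f ∘ φ)) := by
  obtain ⟨φ, hlt | hnlt⟩ := exists_increasing_or_nonincreasing_subseq (· > ·) f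
  · exact ⟨φ, φ.strictMono, Or.inl fun m n hmn => hlt m n hmn⟩
  · exact ⟨φ, φ.strictMono, Or.inr <| monotone_iff_forall_lt.2 fun m n hmn => not_lt.1 (hnlt m n hmn)⟩

theorem exists_subseq_strictAnti_of_strictAnti_sum {ι α : Type*} [AddCommMonoid α] [LinearOrder α]
    [IsOrderedAddMonoid α] (s : Finset ι) (f : ℕ → ι → α)
    (hf : StrictAnti fun m => ∑ k ∈ s, f m k) :
    ∃ k ∈ s, ∃ φ : ℕ → ℕ, StrictMono φ ∧ StrictAnti fun m => f (φ m) k := by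
  classical
  induction s using Finset.induction_on generalizing f with
  | empty => simpa using hf Nat.zero_lt_one
  | insert a s ha ih =>
    obtain ⟨φ, hφ, hanti | hmono⟩ := exists_subseq_strictAnti_or_monotone fun m => f m a
    · exact ⟨a, mem_insert_self a s, φ, hφ, hanti⟩
    · have hrest : StrictAnti fun m => ∑ k ∈ s, f (φ m) k := by
        intro m n hmn
        have hsum := hf (hφ hmn)
        simp only [sum_insert ha] at hsum
        exact lt_of_add_lt_add_left ((add_le_add_left (hmono hmn.le) _).trans_lt hsum)
      obtain ⟨k, hk, ψ, hψ, hanti⟩ := ih (fun m => f (φ m)) hrest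
      exact ⟨k, mem_insert_of_mem hk, φ ∘ ψ, hφ.comp hψ, hanti⟩

theorem stmt_10_general {V : Type*} [CommRing V]
    (v : AddValuation V (WithTop ℝ)) (E : Set V) (hE : E.Infinite)
    (n : ℕ) (a : Fin n → V)
    (hnotatt : ¬ ∃ y ∈ E, ∀ x ∈ E,
      v (∏ k : Fin n, (y - a k)) ≤ v (∏ k : Fin n, (x - a k))) :
    ∃ x : ℕ → V, (∀ m, x m ∈ E) ∧
      ∃ k : Fin n, StrictAnti fun m => v (x m - a k) := by
  push Not at hnotatt
  obtain ⟨x, hxE, hdecr⟩ :=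
    exists_seq_strictAnti_of_forall_exists_lt (fun y => v (∏ k, (y - a k))) hE.nonempty hnotatt
  simp only [Function.comp_def, AddValuation.map_prod] at hdecr
  obtain ⟨k, -, φ, -, hk⟩ :=
    exists_subseq_strictAnti_of_strictAnti_sum univ (fun m k => v (x m - a k)) hdecr
  exact ⟨x ∘ φ, fun m => hxE (φ m), k, hk⟩

theorem stmt_10 {V : Type*} [CommRing V] [IsDomain V] [ValuationRing V]
    (v : AddValuation V (WithTop ℝ)) (E : Set V) (hE : E.Infinite)
    (n : ℕ) (a : Fin n → V)
    (hnotatt : ¬ ∃ y ∈ E, ∀ x ∈ E,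
      v (∏ k : Fin n, (y - a k)) ≤ v (∏ k : Fin n, (x - a k))) :
    ∃ x : ℕ → V, (∀ m, x m ∈ E) ∧
      ∃ k : Fin n, StrictAnti fun m => v (x m - a k) :=
  stmt_10_general v E hE n a hnotatt
end

section
/- Let V be a valuation domain with maximal ideal m, E ⊆ V, and suppose every polynomial f ∈ Int(E,V) takes only finitely many values on E modulo m. Then every prime ideal P of Int(E,V) containing Int(E,m) = {f ∈ K[X] | f(E) ⊆ m} is a maximal ideal, and the residue field Int(E,V)/P is isomorphic to V/m. -/
open Polynomial

/-!
Constants give a ring map `V → Int(E,V) → Int(E,V)/P`. It is surjective: if `a₁, …, a_r ∈ V`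
represent the finitely many residues of `f(E)` modulo `m`, then `∏ (f - aᵢ)` maps `E` into `m`,
hence lies in `Int(E,m) ⊆ P`, and primality gives `f ≡ aᵢ (mod P)` for some `i`. Its kernel is `m`:
elements of `m` are constants in `Int(E,m)`, while units of `V` stay units in `Int(E,V)`.
So `Int(E,V)/P ≅ V/m`, a field.
-/

/-- The ring of integer-valued polynomials on `E` with respect to `V`,
as a subring of `K[X]`. -/
noncomputable def IntER (V K : Type*) [CommRing V] [Field K] [Algebra V K] (E : Set V) :
    Subring (Polynomial K) :=
  ⨅ x ∈ E, ((algebraMap V K).range.comap (Polynomial.evalRingHom (algebraMap V K x)))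

namespace IntER

variable {V K : Type*} [CommRing V] [Field K] [Algebra V K] {E : Set V}

lemma mem_iff {p : K[X]} :
    p ∈ IntER V K E ↔ ∀ x ∈ E, p.eval (algebraMap V K x) ∈ (algebraMap V K).range := by
  simp [IntER, Subring.mem_iInf, Subring.mem_comap]

variable (E) in
noncomputable def const : V →+* IntER V K E :=
  (C.comp (algebraMap V K)).codRestrict _ fun a ↦ mem_iff.2 fun _ _ ↦ by simp

@[simp]
lemma coe_const (a : V) : ((const E a : IntER V K E) : K[X]) = C (algebraMap V K a) := rfl

lemma eval_prod_sub_const {ι : Type*} (s : Finset ι) (c : ι → V) (f : IntER V K E)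
    {x y : V} (hy : algebraMap V K y = (f : K[X]).eval (algebraMap V K x)) :
    ((∏ i ∈ s, (f - const E (c i)) : IntER V K E) : K[X]).eval (algebraMap V K x) =
      algebraMap V K (∏ i ∈ s, (y - c i)) := by
  simp [Polynomial.eval_prod, hy]

section IdealOfValues

variable {P : Ideal (IntER V K E)} {I : Ideal V}
  (hPI : ∀ f : IntER V K E,
    (∀ x ∈ E, (f : K[X]).eval (algebraMap V K x) ∈ algebraMap V K '' I) → f ∈ P)
include hPI

lemma const_mem_of_mem {a : V} (ha : a ∈ I) : const E a ∈ P :=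
  hPI _ fun _ _ ↦ ⟨a, ha, by simp⟩

lemma exists_sub_const_mem [P.IsPrime] (f : IntER V K E)
    (hf : (Ideal.Quotient.mk I ''
      {y : V | ∃ x ∈ E, algebraMap V K y = (f : K[X]).eval (algebraMap V K x)}).Finite) :
    ∃ a : V, f - const E a ∈ P := by
  classical
  let rep := Function.surjInv (Ideal.Quotient.mk_surjective (I := I))
  let A : Finset V := hf.toFinset.image rep
  have hprod : ∏ a ∈ A, (f - const E a) ∈ P := by
    refine hPI _ fun x hx ↦ ?_
    obtain ⟨y, hy⟩ := mem_iff.1 f.2 x hx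
    have hyA : rep (Ideal.Quotient.mk I y) ∈ A :=
      Finset.mem_image_of_mem _ (hf.mem_toFinset.2 ⟨y, ⟨x, hx, hy⟩, rfl⟩)
    have hy_rep : y - rep (Ideal.Quotient.mk I y) ∈ I := by
      rw [← Ideal.Quotient.eq]
      exact (Function.surjInv_eq Ideal.Quotient.mk_surjective _).symm
    refine ⟨_, ?_, (eval_prod_sub_const A id f hy).symm⟩
    rw [← Finset.mul_prod_erase A _ hyA]
    exact I.mul_mem_right _ hy_rep
  obtain ⟨a, -, ha⟩ := Ideal.IsPrime.prod_mem_iff.1 hprod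
  exact ⟨a, ha⟩

end IdealOfValues

end IntER

open IntER in
theorem stmt_11_general (V : Type*) [CommRing V] [IsDomain V] [ValuationRing V]
    (K : Type*) [Field K] [Algebra V K] (E : Set V)
    -- every `f ∈ Int(E,V)` takes only finitely many values on `E` modulo `m`
    (hfin : ∀ f : IntER V K E,
      Set.Finite (Ideal.Quotient.mk (IsLocalRing.maximalIdeal V) ''
        {y : V | ∃ x ∈ E, algebraMap V K y = (f : Polynomial K).eval (algebraMap V K x)}))
    (P : Ideal (IntER V K E)) (hP : P.IsPrime)
    -- `P` contains `Int(E, m)`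
    (hPm : ∀ f : IntER V K E,
      (∀ x ∈ E, (f : Polynomial K).eval (algebraMap V K x) ∈
        algebraMap V K '' (IsLocalRing.maximalIdeal V)) → f ∈ P) :
    P.IsMaximal ∧
      Nonempty ((IntER V K E ⧸ P) ≃+* V ⧸ IsLocalRing.maximalIdeal V) := by
  let φ := (Ideal.Quotient.mk P).comp (const E)
  have hsurj : Function.Surjective φ := by
    rintro ⟨f⟩
    obtain ⟨a, ha⟩ := exists_sub_const_mem hPm f (hfin f)
    exact ⟨a, ((Ideal.Quotient.mk_eq_mk_iff_sub_mem _ _).2 ha).symm⟩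
  have hker : RingHom.ker φ = IsLocalRing.maximalIdeal V := by
    ext a
    refine ⟨fun ha ↦ ?_, fun ha ↦ Ideal.Quotient.eq_zero_iff_mem.2 (const_mem_of_mem hPm ha)⟩
    rw [IsLocalRing.mem_maximalIdeal, mem_nonunits_iff]
    exact fun hu ↦ hP.ne_top (P.eq_top_of_isUnit_mem (Ideal.Quotient.eq_zero_iff_mem.1 ha)
      (hu.map _))
  let e : (IntER V K E ⧸ P) ≃+* V ⧸ IsLocalRing.maximalIdeal V :=
    ((Ideal.quotEquivOfEq hker.symm).trans (RingHom.quotientKerEquivOfSurjective hsurj)).symm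
  have hfield := (Ideal.Quotient.maximal_ideal_iff_isField_quotient _).1
    (IsLocalRing.maximalIdeal.isMaximal V)
  exact ⟨Ideal.Quotient.maximal_of_isField _ (e.toMulEquiv.isField hfield), ⟨e⟩⟩

theorem stmt_11 (V : Type*) [CommRing V] [IsDomain V] [ValuationRing V]
    (K : Type*) [Field K] [Algebra V K] [IsFractionRing V K] (E : Set V)
    -- every `f ∈ Int(E,V)` takes only finitely many values on `E` modulo `m`
    (hfin : ∀ f : IntER V K E,
      Set.Finite (Ideal.Quotient.mk (IsLocalRing.maximalIdeal V) ''
        {y : V | ∃ x ∈ E, algebraMap V K y = (f : Polynomial K).eval (algebraMap V K x)}))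
    (P : Ideal (IntER V K E)) (hP : P.IsPrime)
    -- `P` contains `Int(E, m)`
    (hPm : ∀ f : IntER V K E,
      (∀ x ∈ E, (f : Polynomial K).eval (algebraMap V K x) ∈
        algebraMap V K '' (IsLocalRing.maximalIdeal V)) → f ∈ P) :
    P.IsMaximal ∧
      Nonempty ((IntER V K E ⧸ P) ≃+* V ⧸ IsLocalRing.maximalIdeal V) :=
  stmt_11_general V K E hfin P hP hPm
end

section
/- Let R be a commutative ring with nonzero ideals A and B such that every maximal ideal of R contains exactly one of A, B (i.e., Max(R) is the disjoint union of the maximal ideals containing A and those containing B). If R/A and R/B are local-global rings, then R is local-global. -/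
/-- A commutative ring `R` is *local-global* if every polynomial in finitely many
variables over `R` which represents a unit over every localization of `R` at a
maximal ideal also represents a unit over `R`. -/
def IsLocalGlobal (R : Type*) [CommRing R] : Prop :=
  ∀ (n : ℕ) (f : MvPolynomial (Fin n) R),
    (∀ (M : Ideal R) (hM : M.IsMaximal),
      ∃ w : Fin n → Localization (@Ideal.primeCompl R _ M hM.isPrime),
        IsUnit (MvPolynomial.aeval w f)) →
    ∃ w : Fin n → R, IsUnit (MvPolynomial.aeval w f)

/-! A polynomial over `R` represents a unit over `R/A` and over `R/B`; by the Chinese remainder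
theorem (`A + B = R`, since no maximal ideal contains both) the two witnesses glue to a single
point of `R`, at which the value is a unit because every maximal ideal contains `A` or `B`.
The local hypothesis passes to `R/A` because each localization of `R/A` at a maximal ideal
receives a ring map from the localization of `R` at its preimage. -/

namespace MvPolynomial

variable {σ R S : Type*} [CommRing R] [CommRing S]

def RepresentsUnitLocally (f : MvPolynomial σ R) : Prop :=
  ∀ (M : Ideal R) (hM : M.IsMaximal),
    ∃ w : σ → Localization (@Ideal.primeCompl R _ M hM.isPrime), IsUnit (aeval w f)

theorem aeval_map_of_comp_eq {A B : Type*} [CommRing A] [CommRing B] [Algebra R A]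
    [Algebra S B] (φ : R →+* S) (ψ : A →+* B)
    (h : ψ.comp (algebraMap R A) = (algebraMap S B).comp φ) (w : σ → A) (f : MvPolynomial σ R) :
    aeval (ψ ∘ w) (map φ f) = ψ (aeval w f) := by
  rw [map_aeval, h, aeval_def, coe_eval₂Hom, eval₂_map]
  rfl

theorem aeval_map_quotient_mk (C : Ideal R) (w : σ → R) (f : MvPolynomial σ R) :
    aeval (Ideal.Quotient.mk C ∘ w) (map (Ideal.Quotient.mk C) f) =
      Ideal.Quotient.mk C (aeval w f) :=
  aeval_map_of_comp_eq (Ideal.Quotient.mk C) (Ideal.Quotient.mk C) rfl w f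

theorem RepresentsUnitLocally.map_of_surjective {f : MvPolynomial σ R}
    (hf : f.RepresentsUnitLocally) {φ : R →+* S} (hφ : Function.Surjective φ) :
    (map φ f).RepresentsUnitLocally := by
  intro N hN
  have hM : (N.comap φ).IsMaximal := Ideal.comap_isMaximal_of_surjective φ hφ
  obtain ⟨w, hw⟩ := hf _ hM
  let ψ := Localization.localRingHom (N.comap φ) N φ rfl
  refine ⟨ψ ∘ w, ?_⟩
  rw [aeval_map_of_comp_eq φ ψ (IsLocalization.map_comp _)]
  exact hw.map ψ

end MvPolynomial

namespace Ideal

variable {R : Type*} [CommRing R]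

theorem sup_eq_top_of_forall_isMaximal {A B : Ideal R}
    (h : ∀ M : Ideal R, M.IsMaximal → A ≤ M → ¬ B ≤ M) : A ⊔ B = ⊤ := by
  by_contra hAB
  obtain ⟨M, hM, hle⟩ := exists_le_maximal _ hAB
  exact h M hM (le_sup_left.trans hle) (le_sup_right.trans hle)

theorem exists_mk_eq_and_mk_eq {A B : Ideal R} (h : IsCoprime A B) (a : R ⧸ A) (b : R ⧸ B) :
    ∃ x : R, Quotient.mk A x = a ∧ Quotient.mk B x = b := by
  obtain ⟨y, hy⟩ := (quotientInfEquivQuotientProd A B h).surjective (a, b)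
  obtain ⟨x, rfl⟩ := Quotient.mk_surjective y
  exact ⟨x, congrArg Prod.fst hy, congrArg Prod.snd hy⟩

theorem not_isUnit_mk_of_mem {C M : Ideal R} [M.IsMaximal] (hCM : C ≤ M) {x : R} (hx : x ∈ M) :
    ¬ IsUnit (Quotient.mk C x) := fun hu => by
  have := hu.map (Quotient.factor hCM)
  rw [Quotient.factor_mk, Quotient.eq_zero_iff_mem.mpr hx] at this
  exact not_isUnit_zero this

theorem isUnit_of_isUnit_mk_of_isUnit_mk {A B : Ideal R}
    (hcover : ∀ M : Ideal R, M.IsMaximal → A ≤ M ∨ B ≤ M) {x : R}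
    (hxA : IsUnit (Quotient.mk A x)) (hxB : IsUnit (Quotient.mk B x)) : IsUnit x := by
  by_contra hx
  obtain ⟨M, hM, hxM⟩ := exists_max_ideal_of_mem_nonunits hx
  rcases hcover M hM with hAM | hBM
  · exact not_isUnit_mk_of_mem hAM hxM hxA
  · exact not_isUnit_mk_of_mem hBM hxM hxB

end Ideal

open MvPolynomial in
theorem stmt_12_general {R : Type*} [CommRing R] (A B : Ideal R)
    (hsplit : ∀ M : Ideal R, M.IsMaximal → (A ≤ M ↔ ¬ B ≤ M))
    (hRA : IsLocalGlobal (R ⧸ A)) (hRB : IsLocalGlobal (R ⧸ B)) :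
    IsLocalGlobal R := by
  intro n f (hf : f.RepresentsUnitLocally)
  obtain ⟨wA, hwA⟩ := hRA n _ (hf.map_of_surjective Ideal.Quotient.mk_surjective)
  obtain ⟨wB, hwB⟩ := hRB n _ (hf.map_of_surjective Ideal.Quotient.mk_surjective)
  have hcoprime : IsCoprime A B := Ideal.isCoprime_iff_sup_eq.mpr <|
    Ideal.sup_eq_top_of_forall_isMaximal fun M hM => (hsplit M hM).mp
  choose w hw using fun i => Ideal.exists_mk_eq_and_mk_eq hcoprime (wA i) (wB i)
  have hcover (M : Ideal R) (hM : M.IsMaximal) : A ≤ M ∨ B ≤ M := by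
    have := hsplit M hM
    tauto
  refine ⟨w, Ideal.isUnit_of_isUnit_mk_of_isUnit_mk hcover ?_ ?_⟩
  · rwa [← aeval_map_quotient_mk, show Ideal.Quotient.mk A ∘ w = wA from funext fun i => (hw i).1]
  · rwa [← aeval_map_quotient_mk, show Ideal.Quotient.mk B ∘ w = wB from funext fun i => (hw i).2]

theorem stmt_12 {R : Type*} [CommRing R] (A B : Ideal R)
    (hA : A ≠ ⊥) (hB : B ≠ ⊥)
    (hsplit : ∀ M : Ideal R, M.IsMaximal → (A ≤ M ↔ ¬ B ≤ M))
    (hRA : IsLocalGlobal (R ⧸ A)) (hRB : IsLocalGlobal (R ⧸ B)) :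
    IsLocalGlobal R :=
  stmt_12_general A B hsplit hRA hRB
end

section
/- Let V be a rank-one valuation domain with valuation v, maximal ideal m, fraction field K, and let {x_n} be a pseudo-convergent sequence of elements of E ⊆ V. Then M = {f ∈ Int(E,V) | f(x_n) ∈ m for all sufficiently large n} is a prime ideal of Int(E,V). -/
open Polynomial

/-- The valuation ring of a rank-one (real-valued, additive) valuation on a field `K`:
the subring of elements of nonnegative valuation. -/
noncomputable def valRing (K : Type*) [Field K] (v : AddValuation K (WithTop ℝ)) :
    Subring K where
  carrier := {x | 0 ≤ v x}
  zero_mem' := by simp [Set.mem_setOf_eq, AddValuation.map_zero]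
  one_mem' := by simp [Set.mem_setOf_eq]
  add_mem' := fun {a b} ha hb => le_trans (le_min ha hb) (v.map_add a b)
  mul_mem' := fun {a b} ha hb => by
    simp only [Set.mem_setOf_eq, v.map_mul]; exact add_nonneg ha hb
  neg_mem' := fun {a} ha => by simpa [v.map_neg] using ha

/-- The ring of integer-valued polynomials `Int(E,V)` for `V` the valuation ring
of `v`, as a subring of `K[X]`. -/
noncomputable def IntD (K : Type*) [Field K] (v : AddValuation K (WithTop ℝ))
    (E : Set K) : Subring (Polynomial K) :=
  ⨅ x ∈ E, (valRing K v).comap (Polynomial.evalRingHom x)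

/-!
For every `f ∈ K[X]` the values `v (f (x n))` converge in `WithTop ℝ` to a limit `L` that they
eventually do not exceed (Ostrowski), so they are either eventually `> 0` or eventually `≤ 0`;
since `v (f g) = v f + v g`, this dichotomy makes the ideal prime.

Ostrowski's lemma is proved by induction on the degree. With `γ m = v (x n - x m)` for `m < n`
(strictly increasing), expand `f (x m) - f (x n)` in Hasse derivatives at `x n`: the `i`-th
term has valuation `v (f⁽ⁱ⁾ (x n)) + i γ m`, which tends to `Lᵢ + i γ m` as `n → ∞`. These are
affine in `γ m` with distinct slopes, so for large `m` their minimum `W m` is attained only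
once and `v (f (x m) - f (x n)) → W m`; moreover `W` is strictly increasing. Either
`v (f (x m)) < W m` for some `m`, and then `v (f (x n))` is eventually constant, or
`v (f (x m)) = W m` for all large `m`.
-/

open Filter Topology

theorem tendsto_nhdsLE_iff {α β : Type*} [TopologicalSpace α] [LinearOrder α] [OrderTopology α]
    {f : β → α} {l : Filter β} {a : α} :
    Tendsto f l (𝓝[≤] a) ↔ (∀ᶠ b in l, f b ≤ a) ∧ ∀ a' < a, ∀ᶠ b in l, a' < f b := by
  rw [tendsto_nhdsWithin_iff, tendsto_order]
  exact ⟨fun ⟨⟨hlt, _⟩, hle⟩ => ⟨hle, hlt⟩,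
    fun ⟨hle, hlt⟩ => ⟨⟨hlt, fun _ ha' => hle.mono fun _ hb => hb.trans_lt ha'⟩, hle⟩⟩

theorem Filter.Tendsto.add_coe_nhdsLE {β : Type*} {f : β → WithTop ℝ} {l : Filter β}
    {a : WithTop ℝ} (h : Tendsto f l (𝓝[≤] a)) (r : ℝ) :
    Tendsto (fun b => f b + r) l (𝓝[≤] (a + r)) := by
  rw [tendsto_nhdsLE_iff] at h ⊢
  refine ⟨h.1.mono fun b hb => add_le_add_left hb _, fun y hy => ?_⟩
  lift y to ℝ using (hy.trans_le le_top).ne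
  have hlt : ((y - r : ℝ) : WithTop ℝ) < a := by
    rwa [← WithTop.add_lt_add_iff_right (WithTop.coe_ne_top (a := r)), ← WithTop.coe_add,
      sub_add_cancel]
  filter_upwards [h.2 _ hlt] with b hb
  simpa [← WithTop.coe_add] using WithTop.add_lt_add_right (WithTop.coe_ne_top (a := r)) hb

theorem AddValuation.map_sum_eq_of_lt {K Γ₀ ι : Type*} [Field K]
    [LinearOrderedAddCommMonoidWithTop Γ₀] [DecidableEq ι] (v : AddValuation K Γ₀)
    {s : Finset ι} {f : ι → K} {j : ι} (hj : j ∈ s) (hf : ∀ i ∈ s \ {j}, v (f j) < v (f i)) :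
    v (∑ i ∈ s, f i) = v (f j) :=
  Valuation.map_sum_eq_of_lt v hj hf

theorem AddValuation.tendsto_nhdsLE_sum {K ι β : Type*} [Field K] [DecidableEq ι]
    (v : AddValuation K (WithTop ℝ)) {l : Filter β} {s : Finset ι} {g : ι → β → K}
    {c : ι → WithTop ℝ} (h : ∀ i ∈ s, Tendsto (fun b => v (g i b)) l (𝓝[≤] c i)) {k : ι}
    (hk : k ∈ s) (hmin : ∀ j ∈ s, j ≠ k → c k < c j) :
    Tendsto (fun b => v (∑ i ∈ s, g i b)) l (𝓝[≤] c k) := by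
  refine (h k hk).congr' ?_
  have hdom : ∀ᶠ b in l, ∀ j ∈ s \ {k}, v (g k b) < v (g j b) := by
    refine (eventually_all_finset _).2 fun j hj => ?_
    obtain ⟨hjs, hjk⟩ := Finset.mem_sdiff.1 hj
    filter_upwards [(tendsto_nhdsLE_iff.1 (h k hk)).1,
      (tendsto_nhdsLE_iff.1 (h j hjs)).2 _ (hmin j hjs (by simpa using hjk))] with b h₁ h₂
      using h₁.trans_lt h₂
  filter_upwards [hdom] with b hb using (v.map_sum_eq_of_lt hk hb).symm

theorem Polynomial.eval_sub_eval_eq_sum_hasseDeriv {R : Type*} [CommRing R] (f : R[X])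
    (a b : R) : f.eval b - f.eval a =
      ∑ i ∈ Finset.range f.natDegree, (hasseDeriv (i + 1) f).eval a * (b - a) ^ (i + 1) := by
  have hb : f.eval b = ∑ i ∈ Finset.range (f.natDegree + 1),
      (hasseDeriv i f).eval a * (b - a) ^ i := by
    rw [← sub_add_cancel b a, ← taylor_eval, eval_eq_sum_range, natDegree_taylor,
      add_sub_cancel_right]
    simp only [taylor_coeff]
  rw [hb, Finset.sum_range_succ']
  simp

section PseudoConvergent

variable {K : Type*} [Field K] (v : AddValuation K (WithTop ℝ))

def IsPseudoConvergent (x : ℕ → K) : Prop :=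
  ∀ l m n : ℕ, l < m → m < n → v (x m - x l) < v (x n - x m)

variable {v} {x : ℕ → K}

theorem IsPseudoConvergent.valuation_sub_eq (hx : IsPseudoConvergent v x) {m n : ℕ}
    (hmn : m < n) : v (x n - x m) = v (x (m + 1) - x m) := by
  rcases (Nat.succ_le_of_lt hmn).eq_or_lt with rfl | h
  · rfl
  · rw [show x n - x m = (x (m + 1) - x m) + (x n - x (m + 1)) by ring,
      v.map_add_eq_of_lt_left (hx m (m + 1) n (Nat.lt_succ_self m) h)]

theorem IsPseudoConvergent.exists_strictMono (hx : IsPseudoConvergent v x) :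
    ∃ γ : ℕ → ℝ, StrictMono γ ∧ ∀ m n, m < n → v (x n - x m) = γ m := by
  have hlt : ∀ m, v (x (m + 1) - x m) < v (x (m + 2) - x (m + 1)) := fun m =>
    hx m (m + 1) (m + 2) (by omega) (by omega)
  refine ⟨fun m => (v (x (m + 1) - x m)).untop (hlt m).ne_top,
    strictMono_nat_of_lt_succ fun m => ?_, fun m n hmn => ?_⟩
  · rw [← WithTop.coe_lt_coe, WithTop.coe_untop, WithTop.coe_untop]
    exact hlt m
  · rw [WithTop.coe_untop]
    exact hx.valuation_sub_eq hmn

end PseudoConvergent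

section AffineMinimum

variable {γ : ℕ → ℝ}

theorem eventually_add_mul_ne (hγ : StrictMono γ) {p q : ℝ} (hpq : p ≠ q) (a : ℝ) (b : WithTop ℝ) :
    ∀ᶠ m in atTop, (a : WithTop ℝ) + ↑(p * γ m) ≠ b + ↑(q * γ m) := by
  induction b with
  | top =>
    refine .of_forall fun m => ?_
    rw [top_add, ← WithTop.coe_add]
    exact WithTop.coe_ne_top
  | coe b =>
    by_cases h : ∃ m₀, a + p * γ m₀ = b + q * γ m₀
    · obtain ⟨m₀, hm₀⟩ := h
      filter_upwards [eventually_gt_atTop m₀] with m hm heq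
      have heq' : a + p * γ m = b + q * γ m := by exact_mod_cast heq
      have : γ m = γ m₀ := mul_left_cancel₀ (sub_ne_zero.2 hpq) (by linarith)
      exact hm.ne' (hγ.injective this)
    · rw [not_exists] at h
      exact .of_forall fun m heq => h m (by exact_mod_cast heq)

theorem eventually_exists_unique_min (hγ : StrictMono γ) (s : Finset ℕ) (L : ℕ → WithTop ℝ) {i₀ : ℕ}
    (hi₀ : i₀ ∈ s) (hL : L i₀ ≠ ⊤) :
    ∀ᶠ m in atTop, ∃ k ∈ s, ∀ j ∈ s, j ≠ k →
      L k + ↑(((k : ℝ) + 1) * γ m) < L j + ↑(((j : ℝ) + 1) * γ m) := by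
  have hties : ∀ᶠ m in atTop, ∀ k ∈ s, ∀ j ∈ s, L k ≠ ⊤ → j ≠ k →
      L k + ↑(((k : ℝ) + 1) * γ m) ≠ L j + ↑(((j : ℝ) + 1) * γ m) := by
    simp only [eventually_all_finset, eventually_imp_distrib_left]
    intro k _ j _ hLk hjk
    obtain ⟨a, ha⟩ := WithTop.ne_top_iff_exists.1 hLk
    rw [← ha]
    exact eventually_add_mul_ne hγ
      ((add_left_injective 1).ne (Nat.cast_injective.ne hjk.symm)) a (L j)
  filter_upwards [hties] with m hm
  obtain ⟨k, hk, hmin⟩ :=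
    s.exists_min_image (fun i => L i + ↑(((i : ℝ) + 1) * γ m)) ⟨i₀, hi₀⟩
  have hLk : L k ≠ ⊤ := by
    have := (hmin i₀ hi₀).trans_lt (WithTop.add_lt_top.2 ⟨hL.lt_top, WithTop.coe_lt_top _⟩)
    exact (WithTop.add_lt_top.1 this).1.ne
  exact ⟨k, hk, fun j hj hjk => (hmin j hj).lt_of_ne (hm k hk j hj hLk hjk)⟩

theorem strictMono_inf_add_mul (hγ : StrictMono γ) (s : Finset ℕ) (L : ℕ → WithTop ℝ) {i₀ : ℕ}
    (hi₀ : i₀ ∈ s) (hL : L i₀ ≠ ⊤) :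
    StrictMono fun m => s.inf fun i => L i + ↑(((i : ℝ) + 1) * γ m) := by
  intro m m' hmm'
  obtain ⟨k, hk, hkeq⟩ :=
    s.exists_mem_eq_inf ⟨i₀, hi₀⟩ fun i => L i + ↑(((i : ℝ) + 1) * γ m')
  simp only [hkeq]
  by_cases hLk : L k = ⊤
  · rw [hLk, top_add]
    exact (Finset.inf_le hi₀).trans_lt
      (WithTop.add_lt_top.2 ⟨hL.lt_top, WithTop.coe_lt_top _⟩)
  · calc s.inf (fun i => L i + ↑(((i : ℝ) + 1) * γ m))
        ≤ L k + ↑(((k : ℝ) + 1) * γ m) := Finset.inf_le hk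
      _ < L k + ↑(((k : ℝ) + 1) * γ m') :=
        WithTop.add_lt_add_left hLk
          (WithTop.coe_lt_coe.2 (mul_lt_mul_of_pos_left (hγ hmm') (by positivity)))

end AffineMinimum

section Ostrowski

variable {K : Type*} [Field K] (v : AddValuation K (WithTop ℝ)) {x : ℕ → K}

theorem tendsto_nhdsLE_valuation_eval_sub {γ : ℕ → ℝ}
    (hγ : ∀ m n, m < n → v (x n - x m) = γ m) (f : K[X]) {L : ℕ → WithTop ℝ}
    (hL : ∀ i, Tendsto (fun n => v ((hasseDeriv (i + 1) f).eval (x n))) atTop (𝓝[≤] L i))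
    (m : ℕ) {k : ℕ} (hk : k ∈ Finset.range f.natDegree)
    (hmin : ∀ j ∈ Finset.range f.natDegree, j ≠ k →
      L k + ↑(((k : ℝ) + 1) * γ m) < L j + ↑(((j : ℝ) + 1) * γ m)) :
    Tendsto (fun n => v (f.eval (x m) - f.eval (x n))) atTop
      (𝓝[≤] (L k + ↑(((k : ℝ) + 1) * γ m))) := by
  have hterm : ∀ i, Tendsto
      (fun n => v ((hasseDeriv (i + 1) f).eval (x n) * (x m - x n) ^ (i + 1))) atTop
      (𝓝[≤] (L i + ↑(((i : ℝ) + 1) * γ m))) := fun i => by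
    refine ((hL i).add_coe_nhdsLE _).congr' ?_
    filter_upwards [eventually_gt_atTop m] with n hn
    rw [v.map_mul, v.map_pow, v.map_sub_swap, hγ m n hn, ← WithTop.coe_nsmul, nsmul_eq_mul]
    push_cast
    rfl
  simp_rw [Polynomial.eval_sub_eval_eq_sum_hasseDeriv f (x _) (x m)]
  exact v.tendsto_nhdsLE_sum (fun i _ => hterm i) hk hmin

theorem exists_tendsto_nhdsLE_of_sub {F : ℕ → K} {W : ℕ → WithTop ℝ} (hW : StrictMono W)
    (h : ∀ᶠ m in atTop, Tendsto (fun n => v (F m - F n)) atTop (𝓝[≤] W m)) :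
    ∃ L, Tendsto (fun n => v (F n)) atTop (𝓝[≤] L) := by
  obtain ⟨M, hM⟩ := eventually_atTop.1 h
  by_cases hconst : ∃ m ≥ M, v (F m) < W m
  · obtain ⟨m, hm, hlt⟩ := hconst
    refine ⟨v (F m), (tendsto_const_nhdsWithin Set.self_mem_Iic).congr' ?_⟩
    filter_upwards [(tendsto_nhdsLE_iff.1 (hM m hm)).2 _ hlt] with n hn
    exact (v.map_eq_of_lt_sub (by rwa [v.map_sub_swap])).symm
  · push Not at hconst
    have heq : ∀ m ≥ M, v (F m) = W m := by
      intro m hm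
      refine ((hconst m hm).lt_or_eq.resolve_left fun hlt => ?_).symm
      obtain ⟨n, hmn, hle⟩ :=
        ((eventually_gt_atTop m).and (tendsto_nhdsLE_iff.1 (hM m hm)).1).exists
      have hFn : v (F n) = v (F m - F n) := by
        simpa using v.map_sub_eq_of_lt_right (x := F m) (hle.trans_lt hlt)
      exact (hW hmn).not_ge ((hconst n (by omega)).trans (hFn.trans_le hle))
    have hsup : Tendsto W atTop (𝓝[≤] ⨆ n, W n) :=
      tendsto_nhdsWithin_iff.2 ⟨tendsto_atTop_ciSup hW.monotone (OrderTop.bddAbove _),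
        .of_forall fun n => Set.mem_Iic.2 (le_ciSup (OrderTop.bddAbove _) n)⟩
    exact ⟨_, hsup.congr' (eventually_atTop.2 ⟨M, fun m hm => (heq m hm).symm⟩)⟩

variable {v}

theorem IsPseudoConvergent.exists_tendsto_nhdsLE_eval (hx : IsPseudoConvergent v x)
    (f : K[X]) : ∃ L, Tendsto (fun n => v (f.eval (x n))) atTop (𝓝[≤] L) := by
  obtain ⟨γ, hγmono, hγ⟩ := hx.exists_strictMono
  induction hd : f.natDegree using Nat.strong_induction_on generalizing f with
  | _ d ih =>
  rcases Nat.eq_zero_or_pos d with rfl | hpos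
  · rw [eq_C_of_natDegree_eq_zero hd]
    simpa using ⟨_, tendsto_const_nhdsWithin Set.self_mem_Iic⟩
  choose L hL using fun i => ih _ ((natDegree_hasseDeriv_le f (i + 1)).trans_lt (by omega))
    (hasseDeriv (i + 1) f) rfl
  subst hd
  have hmem : f.natDegree - 1 ∈ Finset.range f.natDegree := Finset.mem_range.2 (by omega)
  have hfin : L (f.natDegree - 1) ≠ ⊤ := by
    have hlead := hL (f.natDegree - 1)
    rw [Nat.sub_add_cancel hpos, hasseDeriv_natDegree_eq_C] at hlead
    simp only [eval_C] at hlead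
    rw [tendsto_nhds_unique (hlead.mono_right nhdsWithin_le_nhds) tendsto_const_nhds,
      v.ne_top_iff, leadingCoeff_ne_zero]
    rintro rfl
    simp at hpos
  refine exists_tendsto_nhdsLE_of_sub v (F := fun n => f.eval (x n))
    (strictMono_inf_add_mul hγmono _ L hmem hfin) ?_
  filter_upwards [eventually_exists_unique_min hγmono _ L hmem hfin] with m ⟨k, hk, hmin⟩
  have hinf : (Finset.range f.natDegree).inf (fun i => L i + ↑(((i : ℝ) + 1) * γ m)) =
      L k + ↑(((k : ℝ) + 1) * γ m) :=
    le_antisymm (Finset.inf_le hk) (Finset.le_inf fun j hj =>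
      (eq_or_ne j k).elim (fun h => h ▸ le_rfl) fun h => (hmin j hj h).le)
  rw [hinf]
  exact tendsto_nhdsLE_valuation_eval_sub v hγ f hL m hk hmin

theorem IsPseudoConvergent.eventually_pos_or_eventually_nonpos (hx : IsPseudoConvergent v x)
    (f : K[X]) :
    (∀ᶠ n in atTop, 0 < v (f.eval (x n))) ∨ ∀ᶠ n in atTop, v (f.eval (x n)) ≤ 0 := by
  obtain ⟨L, hL⟩ := hx.exists_tendsto_nhdsLE_eval f
  rw [tendsto_nhdsLE_iff] at hL
  exact (lt_or_ge 0 L).imp (hL.2 0) fun hL0 => hL.1.mono fun _ hn => hn.trans hL0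

end Ostrowski

section IntegerValued

variable {K : Type*} [Field K] (v : AddValuation K (WithTop ℝ)) {E : Set K} {x : ℕ → K}

theorem valuation_eval_nonneg_of_mem_IntD {g : K[X]} (hg : g ∈ IntD K v E) {a : K}
    (ha : a ∈ E) : 0 ≤ v (g.eval a) := by
  simp only [IntD, Subring.mem_iInf] at hg
  exact hg a ha

def eventuallyPosIdeal (hxE : ∀ n, x n ∈ E) : Ideal (IntD K v E) where
  carrier := {f | ∀ᶠ n in atTop, 0 < v ((f : K[X]).eval (x n))}
  add_mem' {f g} hf hg := by
    filter_upwards [hf, hg] with n hf hg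
    simpa only [Subring.coe_add, eval_add] using v.map_lt_add hf hg
  zero_mem' := .of_forall fun n => by simp
  smul_mem' c f hf := by
    filter_upwards [hf] with n hn
    rw [smul_eq_mul, Subring.coe_mul, eval_mul, v.map_mul]
    exact lt_add_of_nonneg_of_lt (valuation_eval_nonneg_of_mem_IntD v c.2 (hxE n)) hn

variable {v}

theorem IsPseudoConvergent.isPrime_eventuallyPosIdeal (hx : IsPseudoConvergent v x)
    (hxE : ∀ n, x n ∈ E) : (eventuallyPosIdeal v hxE).IsPrime := by
  refine Ideal.isPrime_iff.2 ⟨(Ideal.ne_top_iff_one _).2 fun h => ?_, fun {f g} hfg => ?_⟩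
  · obtain ⟨n, hn⟩ := h.exists
    simp at hn
  · by_contra! hne
    have hf := (hx.eventually_pos_or_eventually_nonpos (f : K[X])).resolve_left hne.1
    have hg := (hx.eventually_pos_or_eventually_nonpos (g : K[X])).resolve_left hne.2
    obtain ⟨n, hpos, hfn, hgn⟩ := (hfg.and (hf.and hg)).exists
    rw [Subring.coe_mul, eval_mul, v.map_mul] at hpos
    exact hpos.not_ge (add_nonpos hfn hgn)

end IntegerValued

theorem stmt_13_general {K : Type*} [Field K] (v : AddValuation K (WithTop ℝ))
    (E : Set K)
    (x : ℕ → K) (hxE : ∀ n, x n ∈ E)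
    (hpc : ∀ l m n : ℕ, l < m → m < n → v (x m - x l) < v (x n - x m)) :
    ∃ I : Ideal (IntD K v E),
      (I : Set (IntD K v E)) =
        {f : IntD K v E | ∃ N : ℕ, ∀ n : ℕ, N ≤ n →
          0 < v ((f : Polynomial K).eval (x n))} ∧
      I.IsPrime :=
  ⟨eventuallyPosIdeal v hxE, Set.ext fun _ => eventually_atTop,
    IsPseudoConvergent.isPrime_eventuallyPosIdeal hpc hxE⟩

theorem stmt_13 {K : Type*} [Field K] (v : AddValuation K (WithTop ℝ))
    (E : Set K) (hE : ∀ x ∈ E, 0 ≤ v x)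
    (x : ℕ → K) (hxE : ∀ n, x n ∈ E)
    (hpc : ∀ l m n : ℕ, l < m → m < n → v (x m - x l) < v (x n - x m)) :
    ∃ I : Ideal (IntD K v E),
      (I : Set (IntD K v E)) =
        {f : IntD K v E | ∃ N : ℕ, ∀ n : ℕ, N ≤ n →
          0 < v ((f : Polynomial K).eval (x n))} ∧
      I.IsPrime :=
  stmt_13_general v E x hxE hpc
end

section
/- Let V be a valuation domain with real-valued valuation v and E ⊆ V admitting a v-ordering {a_n}. For any f ∈ Int(E,V) written as f = Σ_{k=0}^d c_k f_k in the associated basis (f_k(X) = ∏_{j<k}(X − a_j)/(a_k − a_j)), one has inf_{a∈E} v(f(a)) = min_{0≤k≤d} v(c_k) = min_{0≤k≤d} v(f(a_k)). -/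
/-! The minimality defining a `v`-ordering says precisely that each basis polynomial `f_k` is
integer-valued on `E`, so `min_k v(c_k) ≤ v(f(x))` for every `x ∈ E`. Conversely `f_k(a_m)` is `0`
for `m < k` and `1` for `m = k`, so `c_m = f(a_m) - ∑_{k<m} c_k f_k(a_m)`, and strong induction on
`m` gives `min_k v(f(a_k)) ≤ v(c_m)`. -/

open Polynomial

lemma mem_valRing {K : Type*} [Field K] {v : AddValuation K (WithTop ℝ)} {x : K} :
    x ∈ valRing K v ↔ 0 ≤ v x := Iff.rfl

lemma mem_IntD {K : Type*} [Field K] {v : AddValuation K (WithTop ℝ)} {E : Set K}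
    {f : Polynomial K} : f ∈ IntD K v E ↔ ∀ x ∈ E, 0 ≤ v (f.eval x) := by
  simp [IntD, Subring.mem_iInf, Subring.mem_comap, mem_valRing]

lemma C_mem_IntD {K : Type*} [Field K] {v : AddValuation K (WithTop ℝ)} {E : Set K}
    {y : K} (hy : 0 ≤ v y) : Polynomial.C y ∈ IntD K v E := by
  rw [mem_IntD]; intro x hx; simpa using hy

def IsVOrdering {K Γ : Type*} [Field K] [LinearOrderedAddCommMonoidWithTop Γ]
    (v : AddValuation K Γ) (E : Set K) (a : ℕ → K) : Prop :=
  ∀ n : ℕ, 1 ≤ n → ∀ x ∈ E,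
    v (∏ k ∈ Finset.range n, (a n - a k)) ≤ v (∏ k ∈ Finset.range n, (x - a k))

noncomputable def orderingBasis {K : Type*} [Field K] (a : ℕ → K) (k : ℕ) : K[X] :=
  ∏ j ∈ Finset.range k, (C ((a k - a j)⁻¹) * (X - C (a j)))

section OrderingBasis

variable {K : Type*} [Field K] {a : ℕ → K}

lemma eval_orderingBasis (a : ℕ → K) (k : ℕ) (x : K) :
    (orderingBasis a k).eval x = ∏ j ∈ Finset.range k, ((a k - a j)⁻¹ * (x - a j)) := by
  simp [orderingBasis, eval_prod]

lemma eval_orderingBasis_of_lt (a : ℕ → K) {m k : ℕ} (h : m < k) :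
    (orderingBasis a k).eval (a m) = 0 := by
  rw [eval_orderingBasis]
  exact Finset.prod_eq_zero (Finset.mem_range.mpr h) (by simp)

lemma eval_orderingBasis_self (ha : Function.Injective a) (k : ℕ) :
    (orderingBasis a k).eval (a k) = 1 := by
  rw [eval_orderingBasis]
  refine Finset.prod_eq_one fun j hj => inv_mul_cancel₀ (sub_ne_zero.mpr fun h => ?_)
  exact (Finset.mem_range.mp hj).ne' (ha h)

variable {Γ : Type*} [LinearOrderedAddCommMonoidWithTop Γ] {v : AddValuation K Γ} {E : Set K}

lemma valuation_eval_orderingBasis_nonneg (ha : Function.Injective a) (hvo : IsVOrdering v E a)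
    (k : ℕ) {x : K} (hx : x ∈ E) : 0 ≤ v ((orderingBasis a k).eval x) := by
  rcases Nat.eq_zero_or_pos k with rfl | hk
  · simp [orderingBasis]
  set D := ∏ j ∈ Finset.range k, (a k - a j)
  have hD : D ≠ 0 := Finset.prod_ne_zero_iff.mpr fun j hj =>
    sub_ne_zero.mpr fun h => (Finset.mem_range.mp hj).ne' (ha h)
  have heval : (orderingBasis a k).eval x = D⁻¹ * ∏ j ∈ Finset.range k, (x - a j) := by
    rw [eval_orderingBasis, Finset.prod_mul_distrib, Finset.prod_inv_distrib]
  calc (0 : Γ) = v D⁻¹ + v D := by rw [← v.map_mul, inv_mul_cancel₀ hD, v.map_one]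
    _ ≤ v D⁻¹ + v (∏ j ∈ Finset.range k, (x - a j)) := add_le_add_right (hvo k hk x hx) _
    _ = v ((orderingBasis a k).eval x) := by rw [heval, v.map_mul]

lemma le_valuation_sum_mul {ι : Type*} {s : Finset ι} {c g : ι → K} {γ : Γ}
    (hc : ∀ k ∈ s, γ ≤ v (c k)) (hg : ∀ k ∈ s, 0 ≤ v (g k)) :
    γ ≤ v (∑ k ∈ s, c k * g k) :=
  v.map_le_sum fun k hk => by
    rw [v.map_mul]
    exact le_add_of_le_of_nonneg (hc k hk) (hg k hk)

lemma coeff_eq_eval_sub_sum (ha : Function.Injective a) {d m : ℕ} (hm : m ≤ d) (c : ℕ → K) :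
    c m = (∑ k ∈ Finset.range (d + 1), C (c k) * orderingBasis a k).eval (a m) -
      ∑ k ∈ Finset.range m, c k * (orderingBasis a k).eval (a m) := by
  have htrunc : (∑ k ∈ Finset.range (d + 1), C (c k) * orderingBasis a k).eval (a m) =
      ∑ k ∈ Finset.range (m + 1), c k * (orderingBasis a k).eval (a m) := by
    simp only [eval_finsetSum, eval_mul, eval_C]
    refine (Finset.sum_subset (Finset.range_subset_range.mpr (by omega)) fun k _ hk => ?_).symm
    rw [eval_orderingBasis_of_lt a (by simpa using hk), mul_zero]
  rw [htrunc, Finset.sum_range_succ, eval_orderingBasis_self ha, mul_one, add_sub_cancel_left]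

end OrderingBasis

theorem stmt_15_general {K : Type*} [Field K] (v : AddValuation K (WithTop ℝ))
    (E : Set K)
    -- `{a n}` is a v-ordering of `E` (with pairwise distinct terms)
    (a : ℕ → K) (haE : ∀ n, a n ∈ E) (hainj : Function.Injective a)
    (hvo : ∀ n : ℕ, 1 ≤ n → ∀ x ∈ E,
      v (∏ k ∈ Finset.range n, (a n - a k)) ≤ v (∏ k ∈ Finset.range n, (x - a k)))
    (d : ℕ) (c : ℕ → K)
    (f : Polynomial K)
    -- `f = ∑ c_k f_k` in the basis associated to the v-ordering
    (hf : f = ∑ k ∈ Finset.range (d + 1), Polynomial.C (c k) *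
      ∏ j ∈ Finset.range k,
        (Polynomial.C ((a k - a j)⁻¹) * (Polynomial.X - Polynomial.C (a j)))) :
    (Finset.range (d + 1)).inf' Finset.nonempty_range_add_one (fun k => v (c k)) =
      (Finset.range (d + 1)).inf' Finset.nonempty_range_add_one
        (fun k => v (f.eval (a k))) ∧
    ∀ x ∈ E,
      (Finset.range (d + 1)).inf' Finset.nonempty_range_add_one (fun k => v (c k)) ≤
        v (f.eval x) := by
  change f = ∑ k ∈ Finset.range (d + 1), C (c k) * orderingBasis a k at hf
  have hbasis := valuation_eval_orderingBasis_nonneg hainj hvo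
  set ν := (Finset.range (d + 1)).inf' Finset.nonempty_range_add_one (fun k => v (c k))
  set μ := (Finset.range (d + 1)).inf' Finset.nonempty_range_add_one (fun k => v (f.eval (a k)))
  have hlow : ∀ x ∈ E, ν ≤ v (f.eval x) := fun x hx => by
    rw [hf, eval_finsetSum]
    simp only [eval_mul, eval_C]
    exact le_valuation_sum_mul (fun k hk => Finset.inf'_le _ hk) fun k _ => hbasis k hx
  have hup : ∀ m, m ≤ d → μ ≤ v (c m) := by
    intro m
    induction m using Nat.strong_induction_on with
    | _ m ih =>
      intro hm
      rw [coeff_eq_eval_sub_sum hainj hm c, ← hf]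
      refine v.map_le_sub (Finset.inf'_le _ (Finset.mem_range.mpr (Nat.lt_succ_of_le hm))) ?_
      refine le_valuation_sum_mul (fun k hk => ?_) fun k _ => hbasis k (haE m)
      exact ih k (Finset.mem_range.mp hk) ((Finset.mem_range.mp hk).le.trans hm)
  refine ⟨le_antisymm (Finset.le_inf' _ _ fun k _ => hlow (a k) (haE k)) ?_, hlow⟩
  exact Finset.le_inf' _ _ fun m hm => hup m (Nat.lt_succ_iff.mp (Finset.mem_range.mp hm))

theorem stmt_15 {K : Type*} [Field K] (v : AddValuation K (WithTop ℝ))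
    (E : Set K) (hE : ∀ x ∈ E, 0 ≤ v x)
    -- `{a n}` is a v-ordering of `E` (with pairwise distinct terms)
    (a : ℕ → K) (haE : ∀ n, a n ∈ E) (hainj : Function.Injective a)
    (hvo : ∀ n : ℕ, 1 ≤ n → ∀ x ∈ E,
      v (∏ k ∈ Finset.range n, (a n - a k)) ≤ v (∏ k ∈ Finset.range n, (x - a k)))
    (d : ℕ) (c : ℕ → K) (hc : ∀ k, k ≤ d → 0 ≤ v (c k))
    (f : Polynomial K) (hfInt : f ∈ IntD K v E)
    -- `f = ∑ c_k f_k` in the basis associated to the v-ordering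
    (hf : f = ∑ k ∈ Finset.range (d + 1), Polynomial.C (c k) *
      ∏ j ∈ Finset.range k,
        (Polynomial.C ((a k - a j)⁻¹) * (Polynomial.X - Polynomial.C (a j)))) :
    (Finset.range (d + 1)).inf' Finset.nonempty_range_add_one (fun k => v (c k)) =
      (Finset.range (d + 1)).inf' Finset.nonempty_range_add_one
        (fun k => v (f.eval (a k))) ∧
    ∀ x ∈ E,
      (Finset.range (d + 1)).inf' Finset.nonempty_range_add_one (fun k => v (c k)) ≤
        v (f.eval x) :=
  stmt_15_general v E a haE hainj hvo d c f hf
end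

section
/- Let V be a valuation domain with maximal ideal m and fraction field K, E ⊆ V, and U an ultrafilter on E. Then M_U = {f ∈ Int(E,V) | {x ∈ E : f(x) ∈ m} ∈ U} is a prime ideal of Int(E,V) lying over m. -/
open Polynomial

lemma C_mem_IntER {V K : Type*} [CommRing V] [Field K] [Algebra V K] {E : Set V}
    (y : V) : Polynomial.C (algebraMap V K y) ∈ IntER V K E := by
  simp only [IntER, Subring.mem_iInf, Subring.mem_comap]
  intro x hx
  exact ⟨y, by simp⟩

/-!
`M_U` is the ultralimit along `U` of the primes `{f | f(x) ∈ m}`, `x ∈ E`; an ultralimit of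
primes is prime because an ultrafilter contains one of two sets whenever it contains their union.
It lies over `m` because each of these primes does.
-/

namespace Ideal

variable {R S ι : Type*} [Semiring R] [Semiring S] (U : Ultrafilter ι) (I : ι → Ideal R)

def ultralimit : Ideal R where
  carrier := {r | ∀ᶠ i in U, r ∈ I i}
  zero_mem' := Filter.Eventually.of_forall fun i => (I i).zero_mem
  add_mem' ha hb := (ha.and hb).mono fun i h => (I i).add_mem h.1 h.2
  smul_mem' c _ h := h.mono fun i h => (I i).mul_mem_left c h

variable {U I}

theorem mem_ultralimit {r : R} : r ∈ ultralimit U I ↔ ∀ᶠ i in U, r ∈ I i :=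
  Iff.rfl

theorem isPrime_ultralimit (hI : ∀ i, (I i).IsPrime) : (ultralimit U I).IsPrime := by
  refine ⟨fun htop => ?_, fun {a b} hab => ?_⟩
  · obtain ⟨i, hi⟩ := (mem_ultralimit.mp (htop ▸ Submodule.mem_top : (1 : R) ∈ _)).exists
    exact (hI i).ne_top ((eq_top_iff_one _).mpr hi)
  · exact Ultrafilter.eventually_or.mp (hab.mono fun i h => (hI i).mem_or_mem h)

theorem comap_ultralimit (f : S →+* R) :
    (ultralimit U I).comap f = ultralimit U fun i => (I i).comap f :=
  rfl

theorem ultralimit_const (J : Ideal R) : ultralimit U (fun _ => J) = J := by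
  ext r
  exact Filter.eventually_const

end Ideal

namespace IntER

variable {V K : Type*} [CommRing V] [Field K] [Algebra V K] {E : Set V}

noncomputable def C : V →+* IntER V K E :=
  (Polynomial.C.comp (algebraMap V K)).codRestrict _ C_mem_IntER

theorem eval_mem_range (f : IntER V K E) {x : V} (hx : x ∈ E) :
    (f : K[X]).eval (algebraMap V K x) ∈ (algebraMap V K).range := by
  have hf := f.2
  simp only [IntER, Subring.mem_iInf, Subring.mem_comap] at hf
  exact hf x hx

variable [FaithfulSMul V K]

noncomputable def evalAt {x : V} (hx : x ∈ E) : IntER V K E →+* V :=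
  (RingEquiv.ofLeftInverse
      (Function.leftInverse_invFun (FaithfulSMul.algebraMap_injective V K))).symm.toRingHom.comp <|
    ((evalRingHom (algebraMap V K x)).comp (IntER V K E).subtype).codRestrict _
      fun f => eval_mem_range f hx

theorem algebraMap_evalAt {x : V} (hx : x ∈ E) (f : IntER V K E) :
    algebraMap V K (evalAt hx f) = (f : K[X]).eval (algebraMap V K x) :=
  Function.invFun_eq (eval_mem_range f hx)

theorem evalAt_C {x : V} (hx : x ∈ E) (y : V) : evalAt hx (C y : IntER V K E) = y := by
  apply FaithfulSMul.algebraMap_injective V K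
  rw [algebraMap_evalAt]
  exact eval_C

theorem comap_C_comap_evalAt {x : V} (hx : x ∈ E) (I : Ideal V) :
    (I.comap (evalAt hx)).comap (C : V →+* IntER V K E) = I := by
  ext y
  simp only [Ideal.mem_comap, evalAt_C]

theorem mem_comap_evalAt_iff {x : V} (hx : x ∈ E) {I : Ideal V} {f : IntER V K E} :
    f ∈ I.comap (evalAt hx) ↔ (f : K[X]).eval (algebraMap V K x) ∈ algebraMap V K '' I := by
  rw [Ideal.mem_comap, ← algebraMap_evalAt,
    (FaithfulSMul.algebraMap_injective V K).mem_set_image]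
  rfl

end IntER

theorem stmt_16 (V : Type*) [CommRing V] [IsDomain V] [ValuationRing V]
    (K : Type*) [Field K] [Algebra V K] [IsFractionRing V K]
    (E : Set V) (U : Ultrafilter E) :
    ∃ I : Ideal (IntER V K E),
      (I : Set (IntER V K E)) =
        {f : IntER V K E |
          {x : E | (f : Polynomial K).eval (algebraMap V K (x : V)) ∈
            algebraMap V K '' (IsLocalRing.maximalIdeal V)} ∈ U} ∧
      I.IsPrime ∧
      -- `I` lies over the maximal ideal `m` of `V`
      (∀ y : V, (⟨Polynomial.C (algebraMap V K y), C_mem_IntER y⟩ : IntER V K E) ∈ I ↔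
        y ∈ IsLocalRing.maximalIdeal V) := by
  refine ⟨Ideal.ultralimit U fun x => (IsLocalRing.maximalIdeal V).comap (IntER.evalAt x.2),
    ?_, ?_, fun y => ?_⟩
  · ext f
    exact Filter.eventually_congr (.of_forall fun x => IntER.mem_comap_evalAt_iff x.2)
  · exact Ideal.isPrime_ultralimit fun x => (IsLocalRing.maximalIdeal.isMaximal V).isPrime.comap _
  · change (IntER.C y : IntER V K E) ∈ _ ↔ _
    rw [← Ideal.mem_comap, Ideal.comap_ultralimit]
    simp only [IntER.comap_C_comap_evalAt, Ideal.ultralimit_const]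
end

section
/- Let V be a valuation domain with fraction field K such that Int(V) = V[X] (e.g., when the valuation is not discrete or the residue field is infinite). Then for any a ∈ V and any nonzero t ∈ V, Int(B(a, v(t)), V) = V[(X − a)/t], where B(a, v(t)) = {y ∈ V | v(y − a) ≥ v(t)} = a + tV. -/
/-! The affine map `z ↦ a + t z` is a bijection of `V` onto the ball `a + tV`, and the
substitution `X ↦ a + tX` over `K` has inverse `X ↦ (X - a)/t`. Hence `f` is integer-valued on
`a + tV` iff `f(a + tX)` is integer-valued on `V`, i.e. lies in `V[X]`, i.e. iff `f` lies in
`V[(X - a)/t]`. -/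

open Polynomial

section AffineSubstitution

variable {K : Type*} [Field K]

theorem Polynomial.affine_comp_affine_inv (a : K) {t : K} (ht : t ≠ 0) :
    (C a + C t * X).comp (C t⁻¹ * (X - C a)) = X := by
  simp only [add_comp, C_comp, mul_comp, X_comp]
  rw [← mul_assoc, ← C_mul, mul_inv_cancel₀ ht, C_1, one_mul]
  ring

theorem Polynomial.eval_affine_inv (a z : K) {t : K} (ht : t ≠ 0) :
    (C t⁻¹ * (X - C a)).eval (a + t * z) = z := by
  simp only [eval_mul, eval_C, eval_sub, eval_X, add_sub_cancel_left, inv_mul_cancel_left₀ ht]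

end AffineSubstitution

theorem stmt_18_general (V : Type*) [CommRing V]
    (K : Type*) [Field K] [Algebra V K] [IsFractionRing V K]
    -- `Int(V) = V[X]`
    (hIntV : ∀ f : Polynomial K,
      (∀ y : V, f.eval (algebraMap V K y) ∈ (algebraMap V K).range) ↔
        ∃ g : Polynomial V, f = g.map (algebraMap V K))
    (a t : V) (ht : t ≠ 0) :
    -- `Int(B(a, v(t)), V) = V[(X - a)/t]`, where `B(a, v(t)) = a + tV`
    ∀ f : Polynomial K,
      (∀ y : V, (∃ z : V, y = a + t * z) → f.eval (algebraMap V K y) ∈ (algebraMap V K).range) ↔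
        ∃ g : Polynomial V, f = (g.map (algebraMap V K)).comp
          (Polynomial.C ((algebraMap V K t)⁻¹) *
            (Polynomial.X - Polynomial.C (algebraMap V K a))) := by
  intro f
  set φ := algebraMap V K
  have hφt : φ t ≠ 0 := (IsFractionRing.to_map_eq_zero_iff).not.mpr ht
  constructor
  · intro hf
    have hIntegral : ∀ y : V, (f.comp (C (φ a) + C (φ t) * X)).eval (φ y) ∈ φ.range := by
      intro y
      simpa [φ] using hf (a + t * y) ⟨y, rfl⟩
    obtain ⟨g, hg⟩ := (hIntV _).mp hIntegral
    refine ⟨g, ?_⟩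
    rw [← hg, comp_assoc, affine_comp_affine_inv _ hφt, comp_X]
  · rintro ⟨g, rfl⟩ y ⟨z, rfl⟩
    refine ⟨g.eval z, ?_⟩
    rw [eval_comp, map_add, map_mul, eval_affine_inv _ _ hφt, eval_map, eval₂_hom]

theorem stmt_18 (V : Type*) [CommRing V] [IsDomain V] [ValuationRing V]
    (K : Type*) [Field K] [Algebra V K] [IsFractionRing V K]
    -- `Int(V) = V[X]`
    (hIntV : ∀ f : Polynomial K,
      (∀ y : V, f.eval (algebraMap V K y) ∈ (algebraMap V K).range) ↔
        ∃ g : Polynomial V, f = g.map (algebraMap V K))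
    (a t : V) (ht : t ≠ 0) :
    -- `Int(B(a, v(t)), V) = V[(X - a)/t]`, where `B(a, v(t)) = a + tV`
    ∀ f : Polynomial K,
      (∀ y : V, (∃ z : V, y = a + t * z) → f.eval (algebraMap V K y) ∈ (algebraMap V K).range) ↔
        ∃ g : Polynomial V, f = (g.map (algebraMap V K)).comp
          (Polynomial.C ((algebraMap V K t)⁻¹) *
            (Polynomial.X - Polynomial.C (algebraMap V K a))) :=
  stmt_18_general V K hIntV a t ht
end
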